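/- Let ε_1,…,ε_m, ε be exchangeable real random variables (e.g., i.i.d.), α ∈ (0,1), and define q̂_{1−α} as the ⌈(1−α)(m+1)⌉-th smallest value among ε_1,…,ε_m, +∞. Then P(ε ≤ q̂_{1−α}) ≥ 1−α. -/
import Mathlib


open MeasureTheory

/-- The `k`-th smallest value of `v : Fin N → EReal`: the smallest `t` such
that at least `k` of the values are `≤ t`. -/
noncomputable def kthSmallest {N : ℕ} (v : Fin N → EReal) (k : ℕ) : EReal :=
  sInf {t : EReal | k ≤ Nat.card {i : Fin N // v i ≤ t}}

open Finset ENNReal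

noncomputable def rnk {m : ℕ} (w : Fin (m + 1) → ℝ) (j : Fin (m + 1)) : ℕ :=
  (Finset.univ.filter (fun i => i ≠ j ∧ w i < w j)).card

lemma card_filter_perm {n : ℕ} (σ : Equiv.Perm (Fin n)) (p : Fin n → Prop)
    [DecidablePred p] :
    (Finset.univ.filter (fun i => p (σ i))).card = (Finset.univ.filter p).card := by
  apply Finset.card_bij (fun i _ => σ i)
  · intro a ha; simp_all
  · intro a ha b hb hab; exact σ.injective hab
  · intro b hb; exact ⟨σ.symm b, by simp_all, by simp⟩

lemma rnk_perm {m : ℕ} (σ : Equiv.Perm (Fin (m + 1))) (w : Fin (m + 1) → ℝ)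
    (j : Fin (m + 1)) : rnk (fun i => w (σ i)) j = rnk w (σ j) := by
  unfold rnk
  apply Finset.card_bij (fun i _ => σ i)
  · intro a ha
    simp only [mem_filter, mem_univ, true_and] at ha ⊢
    exact ⟨fun h => ha.1 (σ.injective h), ha.2⟩
  · intro a _ b _ hab; exact σ.injective hab
  · intro b hb
    simp only [mem_filter, mem_univ, true_and] at hb ⊢
    exact ⟨σ.symm b, ⟨fun h => hb.1 (by rw [← h]; simp), by simpa using hb.2⟩, by simp⟩

lemma pigeon {m k : ℕ} (hk : k ≤ m + 1) (w : Fin (m + 1) → ℝ) :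
    k ≤ (Finset.univ.filter (fun j => rnk w j < k)).card := by
  rcases Nat.eq_zero_or_pos k with h0 | h1
  · simp [h0]
  set σ := Tuple.sort w with hσ
  have hmono : Monotone (w ∘ σ) := Tuple.monotone_sort w
  set b : ℝ := w (σ ⟨k - 1, by omega⟩) with hb
  -- count of values ≤ b is at least k
  have h1' : k ≤ (Finset.univ.filter (fun j => w j ≤ b)).card := by
    rw [← card_filter_perm σ (fun j => w j ≤ b)]
    have hsub : (Finset.univ.filter (fun j : Fin (m + 1) => (j : ℕ) ≤ k - 1)) ⊆
        Finset.univ.filter (fun j => w (σ j) ≤ b) := by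
      intro j hj
      simp only [mem_filter, mem_univ, true_and] at hj ⊢
      exact hmono (show j ≤ ⟨k - 1, by omega⟩ from hj)
    calc k ≤ (Finset.univ.filter (fun j : Fin (m + 1) => (j : ℕ) ≤ k - 1)).card := by
            have heq : (Finset.univ.filter (fun j : Fin (m + 1) => (j : ℕ) ≤ k - 1))
                = Finset.Iic (⟨k - 1, by omega⟩ : Fin (m + 1)) := by
              ext j; simp [Fin.le_def]
            rw [heq, Fin.card_Iic]; simp; omega
      _ ≤ _ := Finset.card_le_card hsub
  -- count of values < b is less than k
  have h2' : (Finset.univ.filter (fun i => w i < b)).card < k := by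
    rw [← card_filter_perm σ (fun i => w i < b)]
    have hsub : (Finset.univ.filter (fun i : Fin (m + 1) => w (σ i) < b)) ⊆
        Finset.univ.filter (fun i : Fin (m + 1) => (i : ℕ) < k - 1) := by
      intro i hi
      simp only [mem_filter, mem_univ, true_and] at hi ⊢
      by_contra h
      exact absurd (hmono (show (⟨k - 1, by omega⟩ : Fin (m + 1)) ≤ i by
        rw [Fin.le_def]; simpa using Nat.le_of_not_lt h)) (not_le.mpr hi)
    calc (Finset.univ.filter (fun i : Fin (m + 1) => w (σ i) < b)).card
        ≤ (Finset.univ.filter (fun i : Fin (m + 1) => (i : ℕ) < k - 1)).card :=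
          Finset.card_le_card hsub
      _ ≤ k - 1 := by
          have heq : (Finset.univ.filter (fun i : Fin (m + 1) => (i : ℕ) < k - 1))
              = Finset.Iio (⟨k - 1, by omega⟩ : Fin (m + 1)) := by
            ext i; simp [Fin.lt_def]
          rw [heq, Fin.card_Iio]
      _ < k := by omega
  refine le_trans h1' (Finset.card_le_card ?_)
  intro j hj
  simp only [mem_filter, mem_univ, true_and] at hj ⊢
  calc rnk w j ≤ (Finset.univ.filter (fun i => w i < b)).card := by
        apply Finset.card_le_card
        intro i hi
        simp only [rnk, mem_filter, mem_univ, true_and] at hi ⊢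
        exact lt_of_lt_of_le hi.2 hj
    _ < k := h2'

lemma meas_rnk {m : ℕ} (j : Fin (m + 1)) : Measurable (fun w => rnk w j) := by
  have : (fun w : Fin (m + 1) → ℝ => rnk w j)
      = fun w => ∑ i : Fin (m + 1), if i ≠ j ∧ w i < w j then 1 else 0 := by
    funext w; unfold rnk; rw [Finset.card_filter]
  rw [this]
  apply Finset.measurable_sum
  intro i _
  by_cases hij : i = j
  · simp [hij]
  · have : (fun w : Fin (m + 1) → ℝ => if i ≠ j ∧ w i < w j then 1 else 0)
        = fun w => if w i < w j then 1 else 0 := by funext w; simp [hij]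
    rw [this]
    exact Measurable.ite (measurableSet_lt (measurable_pi_apply i) (measurable_pi_apply j))
      measurable_const measurable_const

lemma meas_Mset {m k : ℕ} (j : Fin (m + 1)) :
    MeasurableSet {w : Fin (m + 1) → ℝ | rnk w j < k} :=
  meas_rnk j (measurableSet_Iio (a := k))

lemma rnk_lt_imp {m : ℕ} (k : ℕ) (w : Fin (m + 1) → ℝ)
    (h : rnk w (Fin.last m) < k) :
    ((w (Fin.last m) : ℝ) : EReal) ≤
      kthSmallest (fun i : Fin (m + 1) =>
        if (i : ℕ) < m then ((w i : ℝ) : EReal) else (⊤ : EReal)) k := by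
  apply le_sInf
  intro t ht
  by_contra hlt
  push_neg at hlt
  simp only [Set.mem_setOf_eq] at ht
  rw [Nat.card_eq_fintype_card, Fintype.card_subtype] at ht
  have hsub : (Finset.univ.filter (fun i : Fin (m + 1) =>
      (if (i : ℕ) < m then ((w i : ℝ) : EReal) else (⊤ : EReal)) ≤ t)) ⊆
      Finset.univ.filter (fun i => i ≠ Fin.last m ∧ w i < w (Fin.last m)) := by
    intro i hi
    simp only [mem_filter, mem_univ, true_and] at hi ⊢
    by_cases him : (i : ℕ) < m
    · rw [if_pos him] at hi
      refine ⟨fun he => by simp [he] at him, ?_⟩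
      have : ((w i : ℝ) : EReal) < ((w (Fin.last m) : ℝ) : EReal) := lt_of_le_of_lt hi hlt
      exact_mod_cast this
    · rw [if_neg him] at hi
      exact absurd (lt_of_le_of_lt hi hlt) (by simp)
  have := Finset.card_le_card hsub
  have h2 : k ≤ rnk w (Fin.last m) := le_trans ht this
  omega
/-- split conformal coverage.  If `ε_1, …, ε_m, ε` are
exchangeable and `q̂_{1−α}` is the `⌈(1−α)(m+1)⌉`-th smallest value among
`ε_1, …, ε_m, +∞`, then `P(ε ≤ q̂_{1−α}) ≥ 1 − α`.
Here `E i`, `i < m`, are the calibration scores `ε_{i+1}` and `E (Fin.last m)`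
is the test score `ε`. -/
theorem conformal_coverage
    {Ω : Type*} [MeasurableSpace Ω] (μ : Measure Ω) [IsProbabilityMeasure μ]
    (m : ℕ) (E : Fin (m + 1) → Ω → ℝ) (hmeas : ∀ i, Measurable (E i))
    (hexch : ∀ σ : Equiv.Perm (Fin (m + 1)),
      μ.map (fun ω => fun i => E (σ i) ω) = μ.map (fun ω => fun i => E i ω))
    (α : ℝ) (hα : α ∈ Set.Ioo (0 : ℝ) 1)
    (k : ℕ) (hk : k = ⌈(1 - α) * (m + 1)⌉₊) :
    ENNReal.ofReal (1 - α) ≤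
      μ {ω | (E (Fin.last m) ω : EReal) ≤
        kthSmallest
          (fun i : Fin (m + 1) =>
            if (i : ℕ) < m then ((E i ω : ℝ) : EReal) else (⊤ : EReal)) k} := by
  set W : Ω → Fin (m + 1) → ℝ := fun ω i => E i ω with hWdef
  have hW : Measurable W := measurable_pi_lambda _ hmeas
  set M : Fin (m + 1) → Set (Fin (m + 1) → ℝ) :=
    fun j => {w | rnk w j < k} with hMdef
  have hM : ∀ j, MeasurableSet (M j) := fun j => meas_Mset j
  have hk1 : k ≤ m + 1 := by
    rw [hk]
    apply Nat.ceil_le.mpr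
    push_cast
    nlinarith [hα.1, hα.2]
  -- all marginal probabilities equal
  have hEq : ∀ j, μ (W ⁻¹' M j) = μ (W ⁻¹' M (Fin.last m)) := by
    intro j
    set σ := Equiv.swap (Fin.last m) j with hσ
    have hWσ : Measurable (fun ω => fun i : Fin (m + 1) => E (σ i) ω) :=
      measurable_pi_lambda _ (fun i => hmeas _)
    have h1 : μ (W ⁻¹' M (Fin.last m)) = μ.map W (M (Fin.last m)) :=
      (Measure.map_apply hW (hM _)).symm
    rw [h1, ← hexch σ, Measure.map_apply hWσ (hM _)]
    congr 1
    ext ω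
    simp only [Set.mem_preimage, hMdef, Set.mem_setOf_eq]
    rw [show (fun i => E (σ i) ω) = (fun i => W ω (σ i)) from rfl, rnk_perm σ (W ω),
      Equiv.swap_apply_left]
  -- sum bound
  have hsum : (k : ℝ≥0∞) ≤ ∑ j : Fin (m + 1), μ (W ⁻¹' M j) := by
    have h1 : ∀ j : Fin (m + 1), μ (W ⁻¹' M j)
        = ∫⁻ ω, (W ⁻¹' M j).indicator (fun _ => (1 : ℝ≥0∞)) ω ∂μ :=
      fun j => (lintegral_indicator_one (hW (hM j))).symm
    calc (k : ℝ≥0∞) = ∫⁻ _, (k : ℝ≥0∞) ∂μ := by simp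
      _ ≤ ∫⁻ ω, ∑ j : Fin (m + 1), (W ⁻¹' M j).indicator (fun _ => (1 : ℝ≥0∞)) ω ∂μ := by
          apply lintegral_mono
          intro ω
          have hp := pigeon hk1 (W ω)
          calc (k : ℝ≥0∞)
              ≤ ((Finset.univ.filter (fun j => rnk (W ω) j < k)).card : ℝ≥0∞) := by
                exact_mod_cast hp
            _ = ∑ j : Fin (m + 1), (W ⁻¹' M j).indicator (fun _ => (1 : ℝ≥0∞)) ω := by
                rw [Finset.card_filter]
                push_cast
                apply Finset.sum_congr rfl
                intro j _
                by_cases hj : rnk (W ω) j < k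
                · simp [Set.indicator_apply, hj, hMdef]
                · simp [Set.indicator_apply, hj, hMdef]
      _ = ∑ j : Fin (m + 1), μ (W ⁻¹' M j) := by
          rw [lintegral_finset_sum]
          · exact (Finset.sum_congr rfl (fun j _ => (h1 j).symm))
          · exact fun j _ => measurable_one.indicator (hW (hM j))
  have hsum2 : (k : ℝ≥0∞) ≤ ((m + 1 : ℕ) : ℝ≥0∞) * μ (W ⁻¹' M (Fin.last m)) := by
    calc (k : ℝ≥0∞) ≤ ∑ j : Fin (m + 1), μ (W ⁻¹' M j) := hsum
      _ = ∑ _j : Fin (m + 1), μ (W ⁻¹' M (Fin.last m)) :=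
          Finset.sum_congr rfl (fun j _ => hEq j)
      _ = ((m + 1 : ℕ) : ℝ≥0∞) * μ (W ⁻¹' M (Fin.last m)) := by
          rw [Finset.sum_const, Finset.card_univ, Fintype.card_fin, nsmul_eq_mul]
  -- divide
  have h3 : (k : ℝ≥0∞) / ((m + 1 : ℕ) : ℝ≥0∞) ≤ μ (W ⁻¹' M (Fin.last m)) := by
    rw [ENNReal.div_le_iff_le_mul (Or.inl (by exact_mod_cast Nat.succ_ne_zero m))
      (Or.inl (by simp))]
    rwa [mul_comm] at hsum2
  have h2 : ENNReal.ofReal (1 - α) ≤ (k : ℝ≥0∞) / ((m + 1 : ℕ) : ℝ≥0∞) := by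
    have hc1 : (k : ℝ≥0∞) = ENNReal.ofReal (k : ℝ) := by
      rw [ENNReal.ofReal_natCast]
    have hc2 : ((m + 1 : ℕ) : ℝ≥0∞) = ENNReal.ofReal ((m : ℝ) + 1) := by
      rw [← ENNReal.ofReal_natCast]; norm_num
    rw [hc1, hc2, ← ENNReal.ofReal_div_of_pos (by positivity)]
    apply ENNReal.ofReal_le_ofReal
    rw [le_div_iff₀ (by positivity)]
    calc (1 - α) * ((m : ℝ) + 1) ≤ (⌈(1 - α) * ((m : ℝ) + 1)⌉₊ : ℝ) := Nat.le_ceil _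
      _ = (k : ℝ) := by rw [hk]
  have hsub : W ⁻¹' M (Fin.last m) ⊆ {ω | (E (Fin.last m) ω : EReal) ≤
        kthSmallest
          (fun i : Fin (m + 1) =>
            if (i : ℕ) < m then ((E i ω : ℝ) : EReal) else (⊤ : EReal)) k} := by
    intro ω hω
    exact rnk_lt_imp k (W ω) hω
  exact le_trans h2 (le_trans h3 (measure_mono hsub))
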